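/- A p-family is unique: if p and p' are two functions on balanced pairs of binary sequences with values in F = ℚ(q,a,t), both satisfying the five recursion rules (1)–(5), then p(v,w) = p'(v,w) for every balanced pair (v,w). -/

import Mathlib

open MvPolynomial

noncomputable section

/-- The field `F = ℚ(q,a,t)` of rational functions in three variables over `ℚ`. -/
abbrev KRF : Type := FractionRing (MvPolynomial (Fin 3) ℚ)

/-- The variable `q` in `F`. -/
def fq : KRF := algebraMap (MvPolynomial (Fin 3) ℚ) KRF (X 0)
/-- The variable `a` in `F`. -/
def fa : KRF := algebraMap (MvPolynomial (Fin 3) ℚ) KRF (X 1)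
/-- The variable `t` in `F`. -/
def ft : KRF := algebraMap (MvPolynomial (Fin 3) ℚ) KRF (X 2)

/-- The number `|v|` of ones in a binary sequence. -/
def onesCt (v : List Bool) : ℕ := v.count true

/-- A p-family: a function on (balanced) pairs of binary sequences with values in
`F = ℚ(q,a,t)` satisfying the five recursion rules (1)-(5). -/
def IsPFamily (p : List Bool → List Bool → KRF) : Prop :=
  (∀ n : ℕ, p [] (List.replicate n false) = ((1 + fa) / (1 - fq)) ^ n) ∧
  (∀ m : ℕ, p (List.replicate m false) [] = ((1 + fa) / (1 - fq)) ^ m) ∧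
  (∀ v w : List Bool, onesCt v = onesCt w →
      p (v ++ [true]) (w ++ [true]) = (ft ^ onesCt v + fa) * p v w) ∧
  (∀ v w : List Bool, onesCt v = onesCt w + 1 →
      p (v ++ [false]) (w ++ [true]) = p v (true :: w)) ∧
  (∀ v w : List Bool, onesCt v + 1 = onesCt w →
      p (v ++ [true]) (w ++ [false]) = p (true :: v) w) ∧
  (∀ v w : List Bool, onesCt v = onesCt w →
      p (v ++ [false]) (w ++ [false]) =
        ft ^ (-(onesCt v : ℤ)) * p (true :: v) (true :: w) +
          fq * ft ^ (-(onesCt v : ℤ)) * p (false :: v) (false :: w))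

/-!
Rules (2)–(4) express `p` at a pair through a strictly shorter pair. Rule (5) expresses
`p (v0, w0)` through `(1v, 1w)`, which has fewer zeros, and `(0v, 0w)`, which has as many zeros
but moves a trailing zero of `v` to the front. So induction on the lexicographic rank
(total length, number of zeros, number of trailing zeros of `v`) determines `p`, except when `v`
and `w` consist of zeros only: then `(0v, 0w) = (v0, w0)`, and rule (5) becomes
`(1 - q) p(v0, w0) = p(1v, 1w)`, which still determines `p (v0, w0)` because `1 - q ≠ 0`.
-/

lemma one_sub_fq_ne_zero : (1 : KRF) - fq ≠ 0 := by
  intro h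
  have hX : (X 0 : MvPolynomial (Fin 3) ℚ) = 1 :=
    IsFractionRing.injective (MvPolynomial (Fin 3) ℚ) KRF <| by
      simpa [fq] using (sub_eq_zero.mp h).symm
  simpa using congrArg (eval fun _ => (0 : ℚ)) hX

lemma eq_replicate_false_of_onesCt_eq_zero {v : List Bool} (hv : onesCt v = 0) :
    v = List.replicate v.length false :=
  List.eq_replicate_iff.mpr ⟨rfl, fun b hb => by
    cases b
    · rfl
    · exact absurd hb (List.count_eq_zero.mp hv)⟩

lemma concat_false_eq_cons_false {v : List Bool} (hv : onesCt v = 0) :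
    v ++ [false] = false :: v := by
  rw [eq_replicate_false_of_onesCt_eq_zero hv, ← List.replicate_succ, ← List.replicate_succ']

@[simp]
lemma onesCt_cons (b : Bool) (v : List Bool) : onesCt (b :: v) = onesCt v + b.toNat := by
  cases b <;> simp [onesCt]

@[simp]
lemma onesCt_concat (v : List Bool) (b : Bool) : onesCt (v ++ [b]) = onesCt v + b.toNat := by
  cases b <;> simp [onesCt]

namespace IsPFamily

variable {p : List Bool → List Bool → KRF} (hp : IsPFamily p) {v w : List Bool}
include hp

lemma nil_left (hw : onesCt w = 0) : p [] w = ((1 + fa) / (1 - fq)) ^ w.length := by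
  rw [eq_replicate_false_of_onesCt_eq_zero hw, hp.1, List.length_replicate]

lemma nil_right (hv : onesCt v = 0) : p v [] = ((1 + fa) / (1 - fq)) ^ v.length := by
  rw [eq_replicate_false_of_onesCt_eq_zero hv, hp.2.1, List.length_replicate]

lemma concat_true_true (h : onesCt v = onesCt w) :
    p (v ++ [true]) (w ++ [true]) = (ft ^ onesCt v + fa) * p v w :=
  hp.2.2.1 v w h

lemma concat_false_true (h : onesCt v = onesCt w + 1) :
    p (v ++ [false]) (w ++ [true]) = p v (true :: w) :=
  hp.2.2.2.1 v w h

lemma concat_true_false (h : onesCt v + 1 = onesCt w) :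
    p (v ++ [true]) (w ++ [false]) = p (true :: v) w :=
  hp.2.2.2.2.1 v w h

lemma concat_false_false (h : onesCt v = onesCt w) :
    p (v ++ [false]) (w ++ [false]) =
      ft ^ (-(onesCt v : ℤ)) * p (true :: v) (true :: w) +
        fq * ft ^ (-(onesCt v : ℤ)) * p (false :: v) (false :: w) :=
  hp.2.2.2.2.2 v w h

lemma one_sub_fq_mul_concat_false_false (hv : onesCt v = 0) (hw : onesCt w = 0) :
    (1 - fq) * p (v ++ [false]) (w ++ [false]) = p (true :: v) (true :: w) := by
  have h := hp.concat_false_false (hv.trans hw.symm)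
  rw [hv, ← concat_false_eq_cons_false hv, ← concat_false_eq_cons_false hw] at h
  simp only [CharP.cast_eq_zero, neg_zero, zpow_zero, one_mul] at h
  linear_combination h

end IsPFamily

def pairRank (v w : List Bool) : ℕ ×ₗ ℕ ×ₗ ℕ :=
  toLex (v.length + w.length, toLex (v.count false + w.count false, (v.rtakeWhile not).length))

lemma pairRank_lt_of_length_lt {v w v' w' : List Bool}
    (h : v'.length + w'.length < v.length + w.length) : pairRank v' w' < pairRank v w :=
  Prod.Lex.left _ _ h

lemma pairRank_lt_concat_true_true (v w : List Bool) :
    pairRank v w < pairRank (v ++ [true]) (w ++ [true]) :=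
  pairRank_lt_of_length_lt (by simp; omega)

lemma pairRank_lt_concat_false_true (v w : List Bool) :
    pairRank v (true :: w) < pairRank (v ++ [false]) (w ++ [true]) :=
  pairRank_lt_of_length_lt (by simp)

lemma pairRank_lt_concat_true_false (v w : List Bool) :
    pairRank (true :: v) w < pairRank (v ++ [true]) (w ++ [false]) :=
  pairRank_lt_of_length_lt (by simp)

lemma pairRank_cons_true_lt_concat_false (v w : List Bool) :
    pairRank (true :: v) (true :: w) < pairRank (v ++ [false]) (w ++ [false]) := by
  simp only [pairRank, Prod.Lex.toLex_lt_toLex]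
  right
  simp
  omega

lemma rtakeWhile_not_cons_false {v : List Bool} (hv : true ∈ v) :
    (false :: v).rtakeWhile not = v.rtakeWhile not := by
  have hne : (v.reverse.takeWhile not).length ≠ v.reverse.length := fun h => by
    have hall := List.takeWhile_eq_self_iff.mp (List.takeWhile_prefix _ |>.eq_of_length h)
    simpa using hall true (List.mem_reverse.mpr hv)
  simp only [List.rtakeWhile, List.reverse_cons, List.takeWhile_append, if_neg hne]

lemma pairRank_cons_false_lt_concat_false {v : List Bool} (hv : true ∈ v) (w : List Bool) :
    pairRank (false :: v) (false :: w) < pairRank (v ++ [false]) (w ++ [false]) := by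
  simp only [pairRank, Prod.Lex.toLex_lt_toLex]
  right
  simp [rtakeWhile_not_cons_false hv]

namespace IsPFamily

variable {p p' : List Bool → List Bool → KRF} (hp : IsPFamily p) (hp' : IsPFamily p')
include hp hp'

lemma eq_concat_of_forall_pairRank_lt {v w : List Bool} {x y : Bool}
    (hvw : onesCt (v ++ [x]) = onesCt (w ++ [y]))
    (ih : ∀ v' w', onesCt v' = onesCt w' →
      pairRank v' w' < pairRank (v ++ [x]) (w ++ [y]) → p v' w' = p' v' w') :
    p (v ++ [x]) (w ++ [y]) = p' (v ++ [x]) (w ++ [y]) := by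
  cases x <;> cases y <;> simp only [onesCt_concat, Bool.toNat_true, Bool.toNat_false, add_zero,
    add_left_inj] at hvw
  · have h1 := ih (true :: v) (true :: w) (by simpa) (pairRank_cons_true_lt_concat_false v w)
    by_cases h0 : onesCt v = 0
    · refine mul_left_cancel₀ one_sub_fq_ne_zero ?_
      rw [hp.one_sub_fq_mul_concat_false_false h0 (hvw ▸ h0),
        hp'.one_sub_fq_mul_concat_false_false h0 (hvw ▸ h0), h1]
    · have hv : true ∈ v := List.count_pos_iff.mp (Nat.pos_of_ne_zero h0)
      have h2 := ih (false :: v) (false :: w) (by simpa)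
        (pairRank_cons_false_lt_concat_false hv w)
      rw [hp.concat_false_false hvw, hp'.concat_false_false hvw, h1, h2]
  · rw [hp.concat_false_true hvw, hp'.concat_false_true hvw,
      ih v (true :: w) (by simpa) (pairRank_lt_concat_false_true v w)]
  · rw [hp.concat_true_false hvw, hp'.concat_true_false hvw,
      ih (true :: v) w (by simpa) (pairRank_lt_concat_true_false v w)]
  · rw [hp.concat_true_true hvw, hp'.concat_true_true hvw,
      ih v w hvw (pairRank_lt_concat_true_true v w)]

lemma eq_of_forall_pairRank_lt {v w : List Bool} (hvw : onesCt v = onesCt w)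
    (ih : ∀ v' w', onesCt v' = onesCt w' →
      pairRank v' w' < pairRank v w → p v' w' = p' v' w') :
    p v w = p' v w := by
  rcases List.eq_nil_or_concat' v with rfl | ⟨v, x, rfl⟩
  · have hw : onesCt w = 0 := hvw.symm
    rw [hp.nil_left hw, hp'.nil_left hw]
  rcases List.eq_nil_or_concat' w with rfl | ⟨w, y, rfl⟩
  · rw [hp.nil_right hvw, hp'.nil_right hvw]
  exact hp.eq_concat_of_forall_pairRank_lt hp' hvw ih

end IsPFamily

/-- A p-family is unique: any two p-families agree on all balanced pairs. -/
theorem pFamily_unique (p p' : List Bool → List Bool → KRF)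
    (hp : IsPFamily p) (hp' : IsPFamily p')
    (v w : List Bool) (hvw : onesCt v = onesCt w) :
    p v w = p' v w := by
  induction hr : pairRank v w using WellFoundedLT.induction generalizing v w with
  | _ r ih =>
    subst hr
    exact hp.eq_of_forall_pairRank_lt hp' hvw fun v' w' hb hlt => ih _ hlt v' w' hb rfl
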